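/- arXiv:1509.09047 — 8 statements merged into one kernel-verified Lean document; each statement's English description precedes it below -/
import Mathlib

section
/- Let ≈ be a congruence on M and r : M → M a representative projection for ≈, i.e., x ≈ r(x) for all x ∈ M, and r(x) = r(y) whenever x ≈ y. Fix a matrix A : Matrix V V S and define F, F_r : (V → M) → (V → M) by F(y)_v = ∑_{w} A v w • y_w and F_r(y)_v = r(∑_{w} A v w • y_w). Then for every x : V → M and every h ∈ ℕ, filtering the result of h unfiltered iterations equals h filtered iterations started from the filtered input: r ∘ (F^{[h]}(x)) = F_r^{[h]}(r ∘ x) (where F^{[h]} denotes h-fold iteration and r is applied componentwise). -/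
variable {S M V : Type*}

/-- Action of a matrix over the semiring `S` on `M`-valued vectors:
`(A x)_v = ∑ w, A v w • x w`. -/
def matVec [Semiring S] [AddCommMonoid M] [Module S M] [Fintype V]
    (A : Matrix V V S) (x : V → M) : V → M :=
  fun v => ∑ w, A v w • x w

/-!
Since `≈` is a congruence, `matVec A` maps componentwise congruent vectors to componentwise
congruent vectors, and `r` identifies congruent elements; hence `r ∘ F = F_r ∘ r`, and iterating
this semiconjugacy gives the theorem.
-/

section Congruence

variable [Semiring S] [AddCommMonoid M] [Module S M] [Fintype V]

theorem ModuleCon.matVec_rel (c : ModuleCon S M) (A : Matrix V V S) {x y : V → M}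
    (hxy : ∀ w, c.toAddCon (x w) (y w)) (v : V) :
    c.toAddCon (matVec A x v) (matVec A y v) :=
  c.toAddCon.finsetSum _ fun w _ => c.smul (A v w) (hxy w)

theorem ModuleCon.semiconj_matVec (c : ModuleCon S M) (r : M → M)
    (hr₁ : ∀ x, c.toAddCon x (r x)) (hr₂ : ∀ x y, c.toAddCon x y → r x = r y)
    (A : Matrix V V S) :
    Function.Semiconj (fun (y : V → M) (v : V) => r (y v)) (matVec A)
      (fun (y : V → M) (v : V) => r (matVec A y v)) := fun x =>
  funext fun v => hr₂ _ _ (c.matVec_rel A (fun w => hr₁ (x w)) v)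

end Congruence

/-- Filtering the result of `h` unfiltered iterations equals `h` filtered iterations
started from the filtered input: `r ∘ (F^[h] x) = F_r^[h] (r ∘ x)`. -/
theorem filtered_iterations [Semiring S] [AddCommMonoid M] [Module S M] [Fintype V]
    (R : M → M → Prop) (hequiv : Equivalence R)
    (hsmul : ∀ (s : S) (x x' : M), R x x' → R (s • x) (s • x'))
    (hadd : ∀ x x' y y' : M, R x x' → R y y' → R (x + y) (x' + y'))
    (r : M → M) (hr₁ : ∀ x, R x (r x)) (hr₂ : ∀ x y, R x y → r x = r y)
    (A : Matrix V V S) (x : V → M) (h : ℕ) :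
    (fun v => r ((matVec A)^[h] x v)) =
      (fun (y : V → M) (v : V) => r (matVec A y v))^[h] (fun v => r (x v)) :=
  let c : ModuleCon S M :=
    { r := R, iseqv := hequiv, add' := hadd _ _ _ _, smul := fun s _ _ => hsmul s _ _ }
  (c.semiconj_matVec r hr₁ hr₂ A).iterate_right h x
end

section
/- The source-detection filter r is a representative projection of a congruence relation, namely: (i) r(r(x)) = r(x) for all x; (ii) if r(x) = r(x'), then r(s ⊙ x) = r(s ⊙ x') for every s ∈ ℝ≥0∞; (iii) if r(x) = r(x') and r(y) = r(y'), then r(x ⊕ y) = r(x' ⊕ y'). -/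
/-! Suppose `x ≤ z` pointwise and `z = x` at every vertex kept in `x`. Then `r z = r x`.
Raising entries cannot push a kept entry out of the first `k`, since nothing moves below it.
Nor can it let in a source `v` discarded by `x`: the lexicographically least source at or below
`v` that `x` discards has at least `k` sources below it, all kept in `x`, and these stay below
`v` in `z`. Now `r x`, `s ⊙ r x` and `r x ⊕ r y` are such raisings of `x`, `s ⊙ x` and `x ⊕ y`,
which gives all three claims. -/

open scoped ENNReal Classical

variable {V : Type*}

/-- `v` is kept in `x`: it is a source, its value is at most `d`, and fewer than `k`
sources `w` are lexicographically smaller, i.e. satisfy `(x w, w) < (x v, v)`. -/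
def Kept [LinearOrder V] (S : Set V) (d : ℝ≥0∞) (k : ℕ) (x : V → ℝ≥0∞) (v : V) : Prop :=
  v ∈ S ∧ x v ≤ d ∧
    ({w : V | w ∈ S ∧ (x w < x v ∨ (x w = x v ∧ w < v))}).ncard < k

/-- The source-detection filter: keep the entry of `v` if `v` is kept, else set it to `∞`. -/
noncomputable def sdFilter [LinearOrder V] (S : Set V) (d : ℝ≥0∞) (k : ℕ)
    (x : V → ℝ≥0∞) (v : V) : ℝ≥0∞ :=
  if Kept S d k x v then x v else ⊤

noncomputable def lexKey (x : V → ℝ≥0∞) (v : V) : ℝ≥0∞ ×ₗ V := toLex (x v, v)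

lemma lexKey_congr {x z : V → ℝ≥0∞} {v : V} (h : z v = x v) : lexKey z v = lexKey x v := by
  rw [lexKey, lexKey, h]

section Kept

variable [LinearOrder V] {S : Set V} {d : ℝ≥0∞} {k : ℕ} {x z : V → ℝ≥0∞} {v : V}

def lexBelow (S : Set V) (x : V → ℝ≥0∞) (v : V) : Set V :=
  {w | w ∈ S ∧ lexKey x w < lexKey x v}

lemma kept_iff : Kept S d k x v ↔ v ∈ S ∧ x v ≤ d ∧ (lexBelow S x v).ncard < k := by
  simp only [Kept, lexBelow, lexKey, Prod.Lex.toLex_lt_toLex]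

lemma lexKey_le_lexKey (h : x v ≤ z v) : lexKey x v ≤ lexKey z v :=
  Prod.Lex.toLex_mono ⟨h, le_rfl⟩

lemma le_of_lexKey_le {w : V} (h : lexKey x w ≤ lexKey x v) : x w ≤ x v :=
  Prod.Lex.monotone_fst _ _ h

lemma Kept.of_const_add {s : ℝ≥0∞} (hs : s ≠ ⊤) (h : Kept S d k (fun w => s + x w) v) :
    Kept S d k x v := by
  rw [kept_iff] at h ⊢
  obtain ⟨hvS, hvd, hcard⟩ := h
  have hbelow : lexBelow S (fun w => s + x w) v = lexBelow S x v := by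
    ext w
    simp only [lexBelow, lexKey, Set.mem_ofPred_eq, Prod.Lex.toLex_lt_toLex,
      ENNReal.add_lt_add_iff_left hs, ENNReal.add_right_inj hs]
  exact ⟨hvS, le_add_self.trans hvd, hbelow ▸ hcard⟩

variable [Finite V]

lemma Kept.of_le_of_eq (hle : ∀ w, x w ≤ z w) (hv : z v = x v) (hx : Kept S d k x v) :
    Kept S d k z v := by
  rw [kept_iff] at hx ⊢
  obtain ⟨hvS, hvd, hcard⟩ := hx
  refine ⟨hvS, hv ▸ hvd, lt_of_le_of_lt (Set.ncard_le_ncard ?_ (Set.toFinite _)) hcard⟩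
  rintro w ⟨hwS, hw⟩
  exact ⟨hwS, (lexKey_le_lexKey (hle w)).trans_lt (lexKey_congr hv ▸ hw)⟩

lemma Kept.of_le_of_eqOn_kept (hle : ∀ w, x w ≤ z w)
    (heq : ∀ w, Kept S d k x w → z w = x w) (hz : Kept S d k z v) : Kept S d k x v := by
  by_contra hx
  obtain ⟨hvS, hvd, hcard⟩ := kept_iff.mp hz
  obtain ⟨w, ⟨hwS, hwv, hw⟩, hmin⟩ := Set.exists_min_image
    {u | u ∈ S ∧ lexKey x u ≤ lexKey x v ∧ ¬ Kept S d k x u} (lexKey x) (Set.toFinite _)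
    ⟨v, hvS, le_rfl, hx⟩
  have hkw : k ≤ (lexBelow S x w).ncard := by
    by_contra hlt
    exact hw (kept_iff.mpr ⟨hwS, (le_of_lexKey_le hwv).trans ((hle v).trans hvd), not_le.mp hlt⟩)
  -- by minimality of `w`, everything below it is kept, hence unchanged in `z`
  have hsub : lexBelow S x w ⊆ lexBelow S z v := by
    rintro u ⟨huS, hu⟩
    have hku : Kept S d k x u := by
      by_contra hnu
      exact (hmin u ⟨huS, hu.le.trans hwv, hnu⟩).not_gt hu
    refine ⟨huS, ?_⟩
    calc lexKey z u = lexKey x u := lexKey_congr (heq u hku)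
      _ < lexKey x w := hu
      _ ≤ lexKey x v := hwv
      _ ≤ lexKey z v := lexKey_le_lexKey (hle v)
  exact (hkw.trans (Set.ncard_le_ncard hsub (Set.toFinite _))).not_gt hcard

end Kept

section sdFilter

variable [LinearOrder V] {S : Set V} {d : ℝ≥0∞} {k : ℕ}

lemma le_sdFilter (x : V → ℝ≥0∞) (v : V) : x v ≤ sdFilter S d k x v := by
  unfold sdFilter
  split_ifs
  exacts [le_rfl, le_top]

lemma sdFilter_of_kept {x : V → ℝ≥0∞} {v : V} (h : Kept S d k x v) :
    sdFilter S d k x v = x v :=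
  if_pos h

variable [Finite V]

theorem sdFilter_eq_of_le_of_eqOn_kept {x z : V → ℝ≥0∞} (hle : ∀ v, x v ≤ z v)
    (heq : ∀ v, Kept S d k x v → z v = x v) : sdFilter S d k z = sdFilter S d k x := by
  funext v
  by_cases hv : Kept S d k x v
  · rw [sdFilter_of_kept hv, sdFilter_of_kept (hv.of_le_of_eq hle (heq v hv)), heq v hv]
  · rw [sdFilter, sdFilter, if_neg hv, if_neg fun hz => hv (hz.of_le_of_eqOn_kept hle heq)]

theorem sdFilter_sdFilter (x : V → ℝ≥0∞) : sdFilter S d k (sdFilter S d k x) = sdFilter S d k x :=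
  sdFilter_eq_of_le_of_eqOn_kept (le_sdFilter x) fun _ => sdFilter_of_kept

theorem sdFilter_const_add_sdFilter (s : ℝ≥0∞) (x : V → ℝ≥0∞) :
    sdFilter S d k (fun v => s + sdFilter S d k x v) = sdFilter S d k (fun v => s + x v) := by
  rcases eq_or_ne s ⊤ with rfl | hs
  · simp only [top_add]
  · exact sdFilter_eq_of_le_of_eqOn_kept (fun v => add_le_add_right (le_sdFilter x v) s)
      fun v hv => by rw [sdFilter_of_kept (hv.of_const_add hs)]

theorem sdFilter_min_sdFilter (x y : V → ℝ≥0∞) :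
    sdFilter S d k (fun v => min (sdFilter S d k x v) (sdFilter S d k y v)) =
      sdFilter S d k (fun v => min (x v) (y v)) := by
  refine sdFilter_eq_of_le_of_eqOn_kept
    (fun v => min_le_min (le_sdFilter x v) (le_sdFilter y v)) fun v hv => ?_
  rcases le_total (x v) (y v) with hxy | hyx
  · have hx : Kept S d k x v := hv.of_le_of_eq (fun _ => min_le_left _ _) (min_eq_left hxy).symm
    rw [sdFilter_of_kept hx, min_eq_left (hxy.trans (le_sdFilter y v)), min_eq_left hxy]
  · have hy : Kept S d k y v := hv.of_le_of_eq (fun _ => min_le_right _ _) (min_eq_right hyx).symm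
    rw [sdFilter_of_kept hy, min_eq_right (hyx.trans (le_sdFilter x v)), min_eq_right hyx]

end sdFilter

/-- The source-detection filter is a representative projection of a congruence relation:
it is idempotent, and compatible with uniform translation `(s ⊙ x)_v = s + x_v` and
pointwise minimum `(x ⊕ y)_v = min (x_v) (y_v)`. -/
theorem sdFilter_projection_congruence [Fintype V] [LinearOrder V]
    (S : Set V) (d : ℝ≥0∞) (k : ℕ) :
    (∀ x : V → ℝ≥0∞, sdFilter S d k (sdFilter S d k x) = sdFilter S d k x) ∧
    (∀ (x x' : V → ℝ≥0∞) (s : ℝ≥0∞), sdFilter S d k x = sdFilter S d k x' →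
      sdFilter S d k (fun v => s + x v) = sdFilter S d k (fun v => s + x' v)) ∧
    (∀ x x' y y' : V → ℝ≥0∞, sdFilter S d k x = sdFilter S d k x' →
      sdFilter S d k y = sdFilter S d k y' →
      sdFilter S d k (fun v => min (x v) (y v)) =
        sdFilter S d k (fun v => min (x' v) (y' v))) := by
  refine ⟨sdFilter_sdFilter, fun x x' s h => ?_, fun x x' y y' hx hy => ?_⟩
  · rw [← sdFilter_const_add_sdFilter s x, h, sdFilter_const_add_sdFilter]
  · rw [← sdFilter_min_sdFilter x y, hx, hy, sdFilter_min_sdFilter]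
end

section
/- The all-paths operations form a semiring on the set of functions P → ℝ≥0∞: ⊕ is associative, commutative, and has neutral element 0; ⊙ is associative with two-sided neutral element 1; the distributive laws x ⊙ (y ⊕ z) = (x ⊙ y) ⊕ (x ⊙ z) and (y ⊕ z) ⊙ x = (y ⊙ x) ⊕ (z ⊙ x) hold for all x, y, z; and 0 is a two-sided annihilator for ⊙, i.e., 0 ⊙ x = x ⊙ 0 = 0. -/
/-!
Since `⊕` is the pointwise `⊓` and `0` is `⊤`, the additive laws are lattice laws. The product
`(x ⊙ y)(π)` is an infimum over splits, and addition on `ℝ≥0∞` commutes with infima; this gives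
both distributive laws and absorption by `⊤`. For associativity, both bracketings of `x ⊙ y ⊙ z` at
`π` are the infimum of `x a + y b + z c` over the ways of cutting `π` at two vertices: a split of a
piece of a split glues into a split of `π` the other way round (`isSplit_assoc`), and the glued
piece is again a path because it is an infix of `π`. The unit `1` only sees the splits `([v], π)`
and `(π, [v])`.
-/

open scoped ENNReal

/-- A path over `V`: a nonempty duplicate-free list of vertices. -/
def PathOn (V : Type*) := {l : List V // l ≠ [] ∧ l.Nodup}

/-- `(π₁, π₂)` is a split of `π`: both are nonempty, the last element of `π₁` equals the
head of `π₂`, and `π = π₁ ++ tail π₂`. -/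
def IsSplit {V : Type*} (π π₁ π₂ : List V) : Prop :=
  π₁ ≠ [] ∧ π₂ ≠ [] ∧ π₁.getLast? = π₂.head? ∧ π = π₁ ++ π₂.tail

/-- All-paths addition: pointwise minimum. -/
noncomputable def pAdd {V : Type*} (x y : PathOn V → ℝ≥0∞) : PathOn V → ℝ≥0∞ :=
  fun π => min (x π) (y π)

/-- All-paths multiplication:
`(x ⊙ y)(π) = inf { x(π₁) + y(π₂) : (π₁, π₂) a split of π }` (with `inf ∅ = ∞`). -/
noncomputable def pMul {V : Type*} (x y : PathOn V → ℝ≥0∞) : PathOn V → ℝ≥0∞ :=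
  fun π => sInf {c | ∃ π₁ π₂ : PathOn V, IsSplit π.1 π₁.1 π₂.1 ∧ c = x π₁ + y π₂}

/-- The all-paths zero: the constant-`∞` function. -/
noncomputable def pZero {V : Type*} : PathOn V → ℝ≥0∞ := fun _ => ⊤

/-- The all-paths one: `0` on single-vertex paths, `∞` elsewhere. -/
noncomputable def pOne {V : Type*} : PathOn V → ℝ≥0∞ :=
  fun π => if π.1.length = 1 then 0 else ⊤

section Lists

variable {α : Type*}

lemma getLast?_append_tail_of_getLast?_eq_head? {a b : List α} (h : a.getLast? = b.head?) :
    (a ++ b.tail).getLast? = b.getLast? := by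
  rcases b with _ | ⟨v, b⟩
  · simp_all
  · simp [h, List.getLast?_cons]

lemma isSplit_assoc {l a b c : List α} :
    IsSplit l (a ++ b.tail) c ∧ IsSplit (a ++ b.tail) a b ↔
      IsSplit l a (b ++ c.tail) ∧ IsSplit (b ++ c.tail) b c := by
  rcases b with _ | ⟨v, b⟩
  · simp [IsSplit]
  have hglue (hab : a.getLast? = some v) : (a ++ b).getLast? = (v :: b).getLast? :=
    getLast?_append_tail_of_getLast?_eq_head? (b := v :: b) hab
  simp only [IsSplit, List.tail_cons, List.cons_append, List.head?_cons, List.append_assoc]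
  constructor
  · rintro ⟨⟨-, hc, hbc, rfl⟩, ha, -, hab, -⟩
    exact ⟨⟨ha, by simp, hab, rfl⟩, by simp, hc, hglue hab ▸ hbc, trivial⟩
  · rintro ⟨⟨ha, -, hab, rfl⟩, -, hc, hbc, -⟩
    exact ⟨⟨by simp [ha], hc, hglue hab ▸ hbc, rfl⟩, ha, by simp, hab, trivial⟩

lemma IsSplit.nodup {l p q : List α} (hs : IsSplit l p q) (hl : l.Nodup) :
    p.Nodup ∧ q.Nodup := by
  obtain ⟨hp, hq, hlast, rfl⟩ := hs
  rcases q with _ | ⟨v, q⟩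
  · simp at hq
  rw [List.nodup_append] at hl
  refine ⟨hl.1, List.nodup_cons.2 ⟨fun hv => ?_, hl.2.1⟩⟩
  rw [List.getLast?_eq_some_getLast hp, List.head?_cons, Option.some_inj] at hlast
  exact hl.2.2 _ (List.getLast_mem hp) _ hv hlast

lemma isSplit_singleton_left {l : List α} (hl : l ≠ []) : IsSplit l [l.head hl] l :=
  ⟨by simp, hl, by simp [List.head?_eq_some_head hl], by simp⟩

lemma isSplit_singleton_right {l : List α} (hl : l ≠ []) : IsSplit l l [l.getLast hl] :=
  ⟨hl, by simp, by simp [List.getLast?_eq_some_getLast hl], by simp⟩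

lemma IsSplit.eq_of_singleton_left {l q : List α} {v : α} (hs : IsSplit l [v] q) : q = l := by
  obtain ⟨-, hq, hlast, rfl⟩ := hs
  rcases q with _ | ⟨w, q⟩ <;> simp_all

lemma IsSplit.eq_of_singleton_right {l p : List α} {v : α} (hs : IsSplit l p [v]) : p = l := by
  obtain ⟨-, -, -, rfl⟩ := hs
  simp

end Lists

section AllPaths

variable {V : Type*} {x y z : PathOn V → ℝ≥0∞} {π : PathOn V}

lemma pMul_eq_iInf :
    pMul x y π = ⨅ (σ : PathOn V) (τ : PathOn V) (_ : IsSplit π.1 σ.1 τ.1), x σ + y τ := by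
  refine le_antisymm (le_iInf₂ fun σ τ => le_iInf fun h => sInf_le ⟨σ, τ, h, rfl⟩) ?_
  refine le_sInf ?_
  rintro c ⟨σ, τ, h, rfl⟩
  exact iInf₂_le_of_le σ τ (iInf_le _ h)

lemma pMul_le {σ τ : PathOn V} (h : IsSplit π.1 σ.1 τ.1) : pMul x y π ≤ x σ + y τ :=
  sInf_le ⟨σ, τ, h, rfl⟩

lemma le_pMul_iff {c : ℝ≥0∞} :
    c ≤ pMul x y π ↔ ∀ σ τ : PathOn V, IsSplit π.1 σ.1 τ.1 → c ≤ x σ + y τ := by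
  simp [pMul_eq_iInf]

lemma le_add_pMul_iff {c w : ℝ≥0∞} :
    c ≤ w + pMul x y π ↔ ∀ σ τ : PathOn V, IsSplit π.1 σ.1 τ.1 → c ≤ w + (x σ + y τ) := by
  simp [pMul_eq_iInf, ENNReal.add_iInf]

lemma le_pMul_add_iff {c w : ℝ≥0∞} :
    c ≤ pMul x y π + w ↔ ∀ σ τ : PathOn V, IsSplit π.1 σ.1 τ.1 → c ≤ x σ + y τ + w := by
  simp [pMul_eq_iInf, ENNReal.iInf_add]

lemma pMul_pMul_le_of_isSplit {a b c ρ : PathOn V} (hπ : IsSplit π.1 a.1 ρ.1)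
    (hρ : IsSplit ρ.1 b.1 c.1) : pMul (pMul x y) z π ≤ x a + (y b + z c) := by
  rw [hρ.2.2.2] at hπ hρ
  obtain ⟨hp, hbc⟩ := isSplit_assoc.2 ⟨hπ, hρ⟩
  let p : PathOn V := ⟨a.1 ++ b.1.tail, by simp [a.2.1], (hp.nodup π.2.2).1⟩
  calc pMul (pMul x y) z π ≤ pMul x y p + z c := pMul_le hp
    _ ≤ x a + y b + z c := by gcongr; exact pMul_le hbc
    _ = x a + (y b + z c) := add_assoc _ _ _

lemma pMul_pMul_le_of_isSplit' {a b c p : PathOn V} (hπ : IsSplit π.1 p.1 c.1)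
    (hp : IsSplit p.1 a.1 b.1) : pMul x (pMul y z) π ≤ x a + y b + z c := by
  rw [hp.2.2.2] at hπ hp
  obtain ⟨hρ, hbc⟩ := isSplit_assoc.1 ⟨hπ, hp⟩
  let ρ : PathOn V := ⟨b.1 ++ c.1.tail, by simp [b.2.1], (hρ.nodup π.2.2).2⟩
  calc pMul x (pMul y z) π ≤ x a + pMul y z ρ := pMul_le hρ
    _ ≤ x a + (y b + z c) := by gcongr; exact pMul_le hbc
    _ = x a + y b + z c := (add_assoc _ _ _).symm

lemma pMul_assoc (x y z : PathOn V → ℝ≥0∞) : pMul (pMul x y) z = pMul x (pMul y z) := by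
  funext π
  apply le_antisymm
  · exact le_pMul_iff.2 fun a ρ hπ => le_add_pMul_iff.2 fun b c hρ =>
      pMul_pMul_le_of_isSplit hπ hρ
  · exact le_pMul_iff.2 fun p c hπ => le_pMul_add_iff.2 fun a b hp =>
      pMul_pMul_le_of_isSplit' hπ hp

lemma pOne_pMul (x : PathOn V → ℝ≥0∞) : pMul pOne x = x := by
  funext π
  refine le_antisymm ?_ (le_pMul_iff.2 fun σ τ h => ?_)
  · let v : PathOn V := ⟨[π.1.head π.2.1], by simp⟩
    simpa [pOne, v] using pMul_le (x := pOne) (y := x) (σ := v) (isSplit_singleton_left π.2.1)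
  · by_cases hσ : σ.1.length = 1
    · obtain ⟨v, hv⟩ := List.length_eq_one_iff.1 hσ
      obtain rfl : τ = π := Subtype.ext (hv ▸ h).eq_of_singleton_left
      simp [pOne, hσ]
    · simp [pOne, hσ]

lemma pMul_pOne (x : PathOn V → ℝ≥0∞) : pMul x pOne = x := by
  funext π
  refine le_antisymm ?_ (le_pMul_iff.2 fun σ τ h => ?_)
  · let v : PathOn V := ⟨[π.1.getLast π.2.1], by simp⟩
    simpa [pOne, v] using pMul_le (x := x) (y := pOne) (τ := v) (isSplit_singleton_right π.2.1)
  · by_cases hτ : τ.1.length = 1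
    · obtain ⟨v, hv⟩ := List.length_eq_one_iff.1 hτ
      obtain rfl : σ = π := Subtype.ext (hv ▸ h).eq_of_singleton_right
      simp [pOne, hτ]
    · simp [pOne, hτ]

lemma pAdd_eq_inf (x y : PathOn V → ℝ≥0∞) : pAdd x y = x ⊓ y := rfl

lemma pZero_eq_top : (pZero : PathOn V → ℝ≥0∞) = ⊤ := rfl

lemma pMul_inf (x y z : PathOn V → ℝ≥0∞) : pMul x (y ⊓ z) = pMul x y ⊓ pMul x z := by
  funext π
  simp [pMul_eq_iInf, ← min_add_add_left, iInf_inf_eq]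

lemma inf_pMul (x y z : PathOn V → ℝ≥0∞) : pMul (y ⊓ z) x = pMul y x ⊓ pMul z x := by
  funext π
  simp [pMul_eq_iInf, ← min_add_add_right, iInf_inf_eq]

lemma top_pMul (x : PathOn V → ℝ≥0∞) : pMul ⊤ x = ⊤ := by
  funext π
  simp [pMul_eq_iInf]

lemma pMul_top (x : PathOn V → ℝ≥0∞) : pMul x ⊤ = ⊤ := by
  funext π
  simp [pMul_eq_iInf]

end AllPaths

theorem allPaths_semiring_general {V : Type*} :
    (∀ x y z : PathOn V → ℝ≥0∞, pAdd (pAdd x y) z = pAdd x (pAdd y z)) ∧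
    (∀ x y : PathOn V → ℝ≥0∞, pAdd x y = pAdd y x) ∧
    (∀ x : PathOn V → ℝ≥0∞, pAdd x pZero = x) ∧
    (∀ x : PathOn V → ℝ≥0∞, pAdd pZero x = x) ∧
    (∀ x y z : PathOn V → ℝ≥0∞, pMul (pMul x y) z = pMul x (pMul y z)) ∧
    (∀ x : PathOn V → ℝ≥0∞, pMul pOne x = x) ∧
    (∀ x : PathOn V → ℝ≥0∞, pMul x pOne = x) ∧
    (∀ x y z : PathOn V → ℝ≥0∞, pMul x (pAdd y z) = pAdd (pMul x y) (pMul x z)) ∧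
    (∀ x y z : PathOn V → ℝ≥0∞, pMul (pAdd y z) x = pAdd (pMul y x) (pMul z x)) ∧
    (∀ x : PathOn V → ℝ≥0∞, pMul pZero x = pZero) ∧
    (∀ x : PathOn V → ℝ≥0∞, pMul x pZero = pZero) := by
  simp only [pAdd_eq_inf, pZero_eq_top]
  exact ⟨inf_assoc, inf_comm, inf_top_eq, top_inf_eq, pMul_assoc, pOne_pMul, pMul_pOne,
    pMul_inf, inf_pMul, top_pMul, pMul_top⟩

/-- The all-paths operations form a semiring on functions `P → ℝ≥0∞`. -/
theorem allPaths_semiring {V : Type*} [Fintype V] :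
    (∀ x y z : PathOn V → ℝ≥0∞, pAdd (pAdd x y) z = pAdd x (pAdd y z)) ∧
    (∀ x y : PathOn V → ℝ≥0∞, pAdd x y = pAdd y x) ∧
    (∀ x : PathOn V → ℝ≥0∞, pAdd x pZero = x) ∧
    (∀ x : PathOn V → ℝ≥0∞, pAdd pZero x = x) ∧
    (∀ x y z : PathOn V → ℝ≥0∞, pMul (pMul x y) z = pMul x (pMul y z)) ∧
    (∀ x : PathOn V → ℝ≥0∞, pMul pOne x = x) ∧
    (∀ x : PathOn V → ℝ≥0∞, pMul x pOne = x) ∧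
    (∀ x y z : PathOn V → ℝ≥0∞, pMul x (pAdd y z) = pAdd (pMul x y) (pMul x z)) ∧
    (∀ x y z : PathOn V → ℝ≥0∞, pMul (pAdd y z) x = pAdd (pMul y x) (pMul z x)) ∧
    (∀ x : PathOn V → ℝ≥0∞, pMul pZero x = pZero) ∧
    (∀ x : PathOn V → ℝ≥0∞, pMul x pZero = pZero) :=
  allPaths_semiring_general
end

section
/- Let λ ∈ ℕ and let v, w ∈ V satisfy level(v) ≥ λ and level(w) ≥ λ. Then for every min-hop shortest walk p from v to w in H, every consecutive pair (a, b) of vertices in p satisfies min(level(a), level(b)) ≥ λ; that is, all edges of p have level at least λ. -/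
open scoped ENNReal

variable {V : Type*}

/-- Weight of a walk: sum of the edge weights over consecutive pairs of vertices. -/
noncomputable def walkWeight (w : V → V → ℝ≥0∞) : List V → ℝ≥0∞
  | [] => 0
  | [_] => 0
  | a :: b :: l => w a b + walkWeight w (b :: l)

/-- A walk from `u` to `v`: a nonempty list starting at `u` and ending at `v`. -/
def IsWalk (l : List V) (u v : V) : Prop :=
  l ≠ [] ∧ l.head? = some u ∧ l.getLast? = some v

/-- Edge weights of the simulated graph `H`:
`w_H(v,w) = (1+ε)^(Λ - min(level v, level w)) · dd v w`. -/
noncomputable def wH (ε : ℝ) (Λ : ℕ) (level : V → ℕ) (dd : V → V → ℝ≥0∞)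
    (v w : V) : ℝ≥0∞ :=
  ENNReal.ofReal (1 + ε) ^ (Λ - min (level v) (level w)) * dd v w

/-- Distance in the simulated graph `H`. -/
noncomputable def distH (ε : ℝ) (Λ : ℕ) (level : V → ℕ) (dd : V → V → ℝ≥0∞)
    (v w : V) : ℝ≥0∞ :=
  sInf {c | ∃ l : List V, IsWalk l v w ∧ walkWeight (wH ε Λ level dd) l = c}


/-! Suppose some edge of `p` has level below `λ`. Deleting from `p` every vertex of level below
`λ` keeps both endpoints and gives a walk with fewer hops, and it is no heavier: a maximal run of
deleted vertices between kept vertices `a`, `b` is replaced by the edge `ab`, of weight at most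
`(1+ε)^(Λ-λ) dd(a,b) ≤ (1+ε)^(Λ-λ+1) D(a,b)`, while every edge of the run has an endpoint of level
below `λ` and so weighs at least `(1+ε)^(Λ-λ+1)` times its `D`-length; the triangle inequality for
`D` concludes. So the shorter walk is also shortest, against min-hop minimality. -/

section Walks

variable (w : V → V → ℝ≥0∞)

lemma walkWeight_append_cons (l₁ : List V) (a : V) (l₂ : List V) :
    walkWeight w (l₁ ++ a :: l₂) = walkWeight w (l₁ ++ [a]) + walkWeight w (a :: l₂) := by
  match l₁ with
  | [] => simp [walkWeight]
  | [x] => simp [walkWeight]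
  | x :: y :: t =>
    simp only [List.cons_append, walkWeight]
    rw [← List.cons_append, walkWeight_append_cons (y :: t), List.cons_append, add_assoc]

lemma walkWeight_cons_filter_le_cons_append (P : V → Bool)
    (hshortcut : ∀ a b r, P a → P b → (∀ x ∈ r, ¬ P x) →
      w a b ≤ walkWeight w (a :: r ++ [b])) :
    -- `a` is the last kept vertex and `r` the run of deleted vertices passed since then.
    ∀ (t : List V) (a : V) (r : List V), P a → (∀ x ∈ r, ¬ P x) →
      (∀ x ∈ (a :: t).getLast?, P x) →
      walkWeight w (a :: t.filter P) ≤ walkWeight w (a :: r ++ t)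
  | [], _, _, _, _, _ => by simp [walkWeight]
  | x :: t, a, r, ha, hr, hlast => by
    rw [List.getLast?_cons_cons] at hlast
    by_cases hx : P x
    · rw [List.filter_cons_of_pos hx, List.cons_append, ← List.cons_append,
        walkWeight_append_cons]
      exact add_le_add (by simpa [walkWeight] using hshortcut a x r ha hx hr)
        (walkWeight_cons_filter_le_cons_append P hshortcut t x [] hx (by simp) hlast)
    · cases t with
      | nil => simp_all
      | cons y t =>
        rw [List.filter_cons_of_neg hx]
        simpa using walkWeight_cons_filter_le_cons_append P hshortcut (y :: t) a (r ++ [x]) ha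
          (by simp_all [or_imp]) (by simpa [List.getLast?_cons_cons] using hlast)

lemma walkWeight_filter_le (P : V → Bool)
    (hshortcut : ∀ a b r, P a → P b → (∀ x ∈ r, ¬ P x) →
      w a b ≤ walkWeight w (a :: r ++ [b]))
    (l : List V) (hhead : ∀ x ∈ l.head?, P x) (hlast : ∀ x ∈ l.getLast?, P x) :
    walkWeight w (l.filter P) ≤ walkWeight w l := by
  match l with
  | [] => simp
  | a :: t =>
    have ha : P a := hhead a rfl
    rw [List.filter_cons_of_pos ha]
    simpa using walkWeight_cons_filter_le_cons_append w P hshortcut t a [] ha (by simp) hlast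

end Walks

lemma IsWalk.filter {l : List V} {u v : V} (h : IsWalk l u v) (P : V → Bool) (hu : P u)
    (hv : P v) : IsWalk (l.filter P) u v := by
  obtain ⟨-, hhead, hlast⟩ := h
  obtain ⟨t, rfl⟩ := List.head?_eq_some_iff.1 hhead
  obtain ⟨s, hs⟩ := List.head?_eq_some_iff.1 (List.head?_reverse.trans hlast)
  refine ⟨?_, ?_, ?_⟩
  · simp [List.filter_cons_of_pos hu]
  · simp [List.filter_cons_of_pos hu]
  · rw [List.getLast?_filter, hs]
    simp [hv]

lemma mul_le_walkWeight_of_forall_mem {w D : V → V → ℝ≥0∞} {S : V → Prop} (c : ℝ≥0∞)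
    (htri : ∀ u v w, D u w ≤ D u v + D v w) (hw : ∀ x y, S x ∨ S y → c * D x y ≤ w x y) :
    ∀ (a b : V) (r : List V), r ≠ [] → (∀ x ∈ r, S x) → c * D a b ≤ walkWeight w (a :: r ++ [b])
  | _, _, [], h, _ => absurd rfl h
  | a, b, x :: t, _, hr => by
    have hx : S x := hr x List.mem_cons_self
    have hxb : c * D x b ≤ walkWeight w (x :: t ++ [b]) := by
      rcases eq_or_ne t [] with rfl | ht
      · simpa [walkWeight] using hw x b (Or.inl hx)
      · exact mul_le_walkWeight_of_forall_mem c htri hw x b t ht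
          fun y hy => hr y (List.mem_cons_of_mem x hy)
    calc c * D a b ≤ c * D a x + c * D x b := by rw [← mul_add]; gcongr; exact htri a x b
      _ ≤ w a x + walkWeight w (x :: t ++ [b]) := add_le_add (hw a x (Or.inr hx)) hxb
      _ = walkWeight w (a :: x :: t ++ [b]) := rfl

section SimulatedGraph

variable {ε : ℝ} {Λ : ℕ} {level : V → ℕ} {D dd : V → V → ℝ≥0∞} {lam : ℕ}

lemma pow_mul_le_wH (hε : 0 ≤ ε) (hlow : ∀ v w, D v w ≤ dd v w) (hlam : lam ≤ Λ) {x y : V}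
    (h : min (level x) (level y) < lam) :
    ENNReal.ofReal (1 + ε) ^ (Λ - lam + 1) * D x y ≤ wH ε Λ level dd x y := by
  have hC : 1 ≤ ENNReal.ofReal (1 + ε) := ENNReal.one_le_ofReal.2 (by linarith)
  unfold wH
  gcongr
  · omega
  · exact hlow x y

lemma wH_le_pow_mul (hε : 0 ≤ ε) (hhigh : ∀ v w, dd v w ≤ ENNReal.ofReal (1 + ε) * D v w)
    {a b : V} (ha : lam ≤ level a) (hb : lam ≤ level b) :
    wH ε Λ level dd a b ≤ ENNReal.ofReal (1 + ε) ^ (Λ - lam + 1) * D a b := by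
  have hC : 1 ≤ ENNReal.ofReal (1 + ε) := ENNReal.one_le_ofReal.2 (by linarith)
  calc wH ε Λ level dd a b
      ≤ ENNReal.ofReal (1 + ε) ^ (Λ - lam) * (ENNReal.ofReal (1 + ε) * D a b) := by
        unfold wH
        gcongr
        · exact le_min ha hb
        · exact hhigh a b
    _ = ENNReal.ofReal (1 + ε) ^ (Λ - lam + 1) * D a b := by rw [pow_succ, mul_assoc]

lemma wH_le_walkWeight_of_lt (hε : 0 ≤ ε) (htri : ∀ u v w, D u w ≤ D u v + D v w)
    (hlow : ∀ v w, D v w ≤ dd v w) (hhigh : ∀ v w, dd v w ≤ ENNReal.ofReal (1 + ε) * D v w)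
    (hlam : lam ≤ Λ) {a b : V} (ha : lam ≤ level a) (hb : lam ≤ level b) {r : List V}
    (hr : ∀ x ∈ r, level x < lam) :
    wH ε Λ level dd a b ≤ walkWeight (wH ε Λ level dd) (a :: r ++ [b]) := by
  rcases eq_or_ne r [] with rfl | hne
  · simp [walkWeight]
  refine (wH_le_pow_mul hε hhigh ha hb).trans ?_
  refine mul_le_walkWeight_of_forall_mem _ htri (fun x y hxy => ?_) a b r hne hr
  exact pow_mul_le_wH hε hlow hlam (min_lt_iff.2 hxy)

end SimulatedGraph

theorem minHop_shortest_walk_level_general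
    (ε : ℝ) (hε : 0 ≤ ε) (Λ : ℕ) (level : V → ℕ) (hlevel : ∀ v, level v ≤ Λ)
    (D dd : V → V → ℝ≥0∞)
    (htri : ∀ u v w, D u w ≤ D u v + D v w)
    (hlow : ∀ v w, D v w ≤ dd v w)
    (hhigh : ∀ v w, dd v w ≤ ENNReal.ofReal (1 + ε) * D v w)
    (lam : ℕ) (v w : V) (hv : lam ≤ level v) (hw : lam ≤ level w)
    (p : List V) (hwalk : IsWalk p v w)
    (hshort : walkWeight (wH ε Λ level dd) p = distH ε Λ level dd v w)
    (hminhop : ∀ q : List V, IsWalk q v w →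
      walkWeight (wH ε Λ level dd) q = distH ε Λ level dd v w → p.length ≤ q.length) :
    ∀ a b : V, (a, b) ∈ p.zip p.tail → lam ≤ min (level a) (level b) := by
  intro a b hab
  by_contra hlow_edge
  set P : V → Bool := fun x => decide (lam ≤ level x)
  have hq : IsWalk (p.filter P) v w := hwalk.filter P (by simpa [P]) (by simpa [P])
  have hle : walkWeight (wH ε Λ level dd) (p.filter P) ≤ walkWeight (wH ε Λ level dd) p :=
    walkWeight_filter_le _ P
      (fun _ _ _ ha hb hr => wH_le_walkWeight_of_lt hε htri hlow hhigh (hv.trans (hlevel v))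
        (by simpa [P] using ha) (by simpa [P] using hb) (by simpa [P] using hr))
      p (by simp [hwalk.2.1, P, hv]) (by simp [hwalk.2.2, P, hw])
  have hq_short : walkWeight (wH ε Λ level dd) (p.filter P) = distH ε Λ level dd v w :=
    le_antisymm (hle.trans_eq hshort) (sInf_le ⟨_, hq, rfl⟩)
  have hlt : (p.filter P).length < p.length := by
    obtain ⟨ha, hb⟩ := List.of_mem_zip hab
    refine List.length_filter_lt_length_iff_exists.2 ?_
    rcases min_lt_iff.1 (not_le.1 hlow_edge) with h | h
    · exact ⟨a, ha, by simpa [P] using h⟩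
    · exact ⟨b, List.mem_of_mem_tail hb, by simpa [P] using h⟩
  exact (hminhop _ hq hq_short).not_gt hlt

/-- All edges of a min-hop shortest walk between two vertices of level at least `λ`
have level at least `λ`. -/
theorem minHop_shortest_walk_level [Fintype V]
    (ε : ℝ) (hε : 0 ≤ ε) (Λ : ℕ) (level : V → ℕ) (hlevel : ∀ v, level v ≤ Λ)
    (D dd : V → V → ℝ≥0∞)
    (hDsymm : ∀ v w, D v w = D w v) (hddsymm : ∀ v w, dd v w = dd w v)
    (hD0 : ∀ v, D v v = 0) (hdd0 : ∀ v, dd v v = 0)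
    (htri : ∀ u v w, D u w ≤ D u v + D v w)
    (hlow : ∀ v w, D v w ≤ dd v w)
    (hhigh : ∀ v w, dd v w ≤ ENNReal.ofReal (1 + ε) * D v w)
    (lam : ℕ) (v w : V) (hv : lam ≤ level v) (hw : lam ≤ level w)
    (p : List V) (hwalk : IsWalk p v w)
    (hshort : walkWeight (wH ε Λ level dd) p = distH ε Λ level dd v w)
    (hminhop : ∀ q : List V, IsWalk q v w →
      walkWeight (wH ε Λ level dd) q = distH ε Λ level dd v w → p.length ≤ q.length) :
    ∀ a b : V, (a, b) ∈ p.zip p.tail → lam ≤ min (level a) (level b) :=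
  minHop_shortest_walk_level_general ε hε Λ level hlevel D dd htri hlow hhigh lam v w hv hw p hwalk
    hshort hminhop
end

section
/- The matrix A_H decomposes as A_H = ⊕_{λ=0}^{Λ} P_λ (A_λ)^d P_λ, i.e., for all v, w ∈ V, A_H(v,w) = min_{0 ≤ λ ≤ Λ} (P_λ · (A_λ)^d · P_λ)(v,w), where all products and powers are min-plus matrix products. -/
/-
Sandwiching a matrix between two copies of `P_λ` keeps exactly the entries `(v, w)` with
`λ ≤ min (level v) (level w)` and sets the others to `∞`. A positive finite scalar factors out
of min-plus powers, so the surviving entry of `P_λ (A_λ)^d P_λ` is `(1+ε)^(Λ-λ) (A_G^d)(v,w)`.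
Since `1 + ε ≥ 1` this decreases in `λ`, so the minimum over `λ ≤ Λ` is attained at
`λ = min (level v) (level w)`.
-/

open scoped ENNReal

variable {V : Type*}

/-- The min-plus matrix product: `(A B)_{vw} = min_u (A_{vu} + B_{uw})`. -/
noncomputable def mpMul [Fintype V] (A B : V → V → ℝ≥0∞) : V → V → ℝ≥0∞ :=
  fun v w => ⨅ u, A v u + B u w

/-- The min-plus identity matrix: `0` on the diagonal, `∞` elsewhere. -/
noncomputable def mpId [DecidableEq V] : V → V → ℝ≥0∞ :=
  fun v w => if v = w then 0 else ⊤

/-- Min-plus matrix powers. -/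
noncomputable def mpPow [Fintype V] [DecidableEq V] (A : V → V → ℝ≥0∞) :
    ℕ → V → V → ℝ≥0∞
  | 0 => mpId
  | h + 1 => mpMul A (mpPow A h)

/-- The projection matrix `P_λ`: `0` on diagonal entries of vertices of level at least
`λ`, and `∞` everywhere else. -/
noncomputable def projMat [DecidableEq V] (level : V → ℕ) (lam : ℕ) : V → V → ℝ≥0∞ :=
  fun v w => if v = w ∧ lam ≤ level v then 0 else ⊤

/-- The matrix `A_λ`: the entries of `A_G` scaled by `(1+ε)^(Λ-λ)`. -/
noncomputable def scaledMat (ε : ℝ) (Λ lam : ℕ) (AG : V → V → ℝ≥0∞) : V → V → ℝ≥0∞ :=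
  fun v w => ENNReal.ofReal (1 + ε) ^ (Λ - lam) * AG v w

section MinPlus

variable [Fintype V] [DecidableEq V]

theorem mpPow_const_mul {c : ℝ≥0∞} (hc₀ : c ≠ 0) (hc : c ≠ ⊤) (A : V → V → ℝ≥0∞) (d : ℕ)
    (v w : V) : mpPow (fun a b => c * A a b) d v w = c * mpPow A d v w := by
  induction d generalizing v w with
  | zero =>
    simp only [mpPow, mpId]
    split_ifs
    · rw [mul_zero]
    · rw [ENNReal.mul_top hc₀]
  | succ d ih =>
    have : Nonempty V := ⟨v⟩
    simp only [mpPow, mpMul, ih, ← mul_add]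
    exact (ENNReal.mul_iInf fun h => absurd h hc).symm

theorem projMat_mpMul (level : V → ℕ) (lam : ℕ) (B : V → V → ℝ≥0∞) (v w : V) :
    mpMul (projMat level lam) B v w = if lam ≤ level v then B v w else ⊤ := by
  simp only [mpMul, projMat, ite_add, zero_add, top_add]
  simp only [← iInf_eq_if, iInf_and, iInf_iInf_eq_right]

theorem mpMul_projMat (level : V → ℕ) (lam : ℕ) (B : V → V → ℝ≥0∞) (v w : V) :
    mpMul B (projMat level lam) v w = if lam ≤ level w then B v w else ⊤ := by
  simp only [mpMul, projMat, add_ite, add_zero, add_top]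
  simp only [← iInf_eq_if, iInf_and, iInf_iInf_eq_left]

theorem projMat_mpMul_projMat (level : V → ℕ) (lam : ℕ) (B : V → V → ℝ≥0∞) (v w : V) :
    mpMul (mpMul (projMat level lam) B) (projMat level lam) v w =
      if lam ≤ min (level v) (level w) then B v w else ⊤ := by
  rw [mpMul_projMat, projMat_mpMul]
  by_cases hv : lam ≤ level v <;> by_cases hw : lam ≤ level w <;> simp [hv, hw]

theorem mpPow_scaledMat {ε : ℝ} (hε : 0 ≤ ε) (Λ lam : ℕ) (A : V → V → ℝ≥0∞) (d : ℕ)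
    (v w : V) :
    mpPow (scaledMat ε Λ lam A) d v w = ENNReal.ofReal (1 + ε) ^ (Λ - lam) * mpPow A d v w := by
  have hpos : 0 < ENNReal.ofReal (1 + ε) := ENNReal.ofReal_pos.2 (by linarith)
  exact mpPow_const_mul (pow_ne_zero _ hpos.ne') (ENNReal.pow_ne_top ENNReal.ofReal_ne_top) A d v w

end MinPlus

theorem iInf_range_ite_le_of_antitone {α : Type*} [CompleteLattice α] {f : ℕ → α}
    (hf : Antitone f) {m n : ℕ} (hmn : m < n) :
    ⨅ k ∈ Finset.range n, (if k ≤ m then f k else ⊤) = f m := by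
  refine le_antisymm (iInf₂_le_of_le m (Finset.mem_range.2 hmn) (by rw [if_pos le_rfl]))
    (le_iInf₂ fun k _ => ?_)
  split_ifs with hkm
  · exact hf hkm
  · exact le_top

theorem AH_decomposition_general [Fintype V] [DecidableEq V]
    (ε : ℝ) (hε : 0 ≤ ε) (Λ d : ℕ) (level : V → ℕ) (hlevel : ∀ v, level v ≤ Λ)
    (AG : V → V → ℝ≥0∞) :
    ∀ v w : V,
      ENNReal.ofReal (1 + ε) ^ (Λ - min (level v) (level w)) * mpPow AG d v w =
      ⨅ lam ∈ Finset.range (Λ + 1),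
        mpMul (mpMul (projMat level lam) (mpPow (scaledMat ε Λ lam AG) d))
          (projMat level lam) v w := by
  intro v w
  have hone : 1 ≤ ENNReal.ofReal (1 + ε) := ENNReal.one_le_ofReal.2 (by linarith)
  have hanti : Antitone fun lam => ENNReal.ofReal (1 + ε) ^ (Λ - lam) * mpPow AG d v w :=
    fun _ _ h => mul_le_mul_left (pow_le_pow_right₀ hone (Nat.sub_le_sub_left h Λ)) _
  have hmin : min (level v) (level w) < Λ + 1 :=
    Nat.lt_succ_of_le ((min_le_left _ _).trans (hlevel v))
  simp only [projMat_mpMul_projMat, mpPow_scaledMat hε]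
  exact (iInf_range_ite_le_of_antitone hanti hmin).symm

/-- The adjacency matrix of the simulated graph `H` decomposes as
`A_H = ⊕_{λ=0}^{Λ} P_λ (A_λ)^d P_λ` under min-plus matrix products. -/
theorem AH_decomposition [Fintype V] [DecidableEq V]
    (ε : ℝ) (hε : 0 ≤ ε) (Λ d : ℕ) (level : V → ℕ) (hlevel : ∀ v, level v ≤ Λ)
    (AG : V → V → ℝ≥0∞) (hAG : ∀ v, AG v v = 0) :
    ∀ v w : V,
      ENNReal.ofReal (1 + ε) ^ (Λ - min (level v) (level w)) * mpPow AG d v w =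
      ⨅ lam ∈ Finset.range (Λ + 1),
        mpMul (mpMul (projMat level lam) (mpPow (scaledMat ε Λ lam AG) d))
          (projMat level lam) v w :=
  AH_decomposition_general ε hε Λ d level hlevel AG
end

section
/- For every x : V → ℝ≥0∞, every v ∈ V, and every s ∈ ℝ≥0∞: there exists w < v with x_w ≤ s if and only if there exists w < v with r(x)_w ≤ s. -/
open scoped ENNReal Classical

variable {V : Type*}

/-- The LE-list filter: `r(x)_v = ∞` if some `w < v` has `x_w ≤ x_v`, else `x_v`. -/
noncomputable def leFilter [LinearOrder V] (x : V → ℝ≥0∞) (v : V) : ℝ≥0∞ :=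
  if ∃ w, w < v ∧ x w ≤ x v then ⊤ else x v

/-! The least index `m < v` with `x_m ≤ s` survives the filter: an earlier `u` with
`x_u ≤ x_m` would itself be an index below `v` with `x_u ≤ s`. -/

section LinearOrder

variable [LinearOrder V] (x : V → ℝ≥0∞)

theorem le_leFilter (w : V) : x w ≤ leFilter x w := by
  unfold leFilter
  split_ifs
  exacts [le_top, le_rfl]

theorem leFilter_eq_self {w : V} (h : ∀ u < w, x w < x u) : leFilter x w = x w := by
  refine if_neg ?_
  rintro ⟨u, huw, hle⟩
  exact (h u huw).not_ge hle

theorem exists_lt_leFilter_le_iff [WellFoundedLT V] (v : V) (s : ℝ≥0∞) :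
    (∃ w, w < v ∧ x w ≤ s) ↔ (∃ w, w < v ∧ leFilter x w ≤ s) := by
  refine ⟨fun hS => ?_, fun ⟨w, hwv, hws⟩ => ⟨w, hwv, (le_leFilter x w).trans hws⟩⟩
  obtain ⟨m, ⟨hmv, hms⟩, hmin⟩ := wellFounded_lt.has_min {w | w < v ∧ x w ≤ s} hS
  refine ⟨m, hmv, (leFilter_eq_self x fun u hum => ?_).trans_le hms⟩
  by_contra! hle
  exact hmin u ⟨hum.trans hmv, hle.trans hms⟩ hum

end LinearOrder

/-- There is `w < v` with `x_w ≤ s` iff there is `w < v` with `r(x)_w ≤ s`. -/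
theorem leFilter_domination [Fintype V] [LinearOrder V]
    (x : V → ℝ≥0∞) (v : V) (s : ℝ≥0∞) :
    (∃ w, w < v ∧ x w ≤ s) ↔ (∃ w, w < v ∧ leFilter x w ≤ s) :=
  exists_lt_leFilter_le_iff x v s
end

section
/- For all x, x' : V → ℝ≥0∞ with r(x) = r(x') and every s ∈ ℝ≥0∞, the uniformly translated vectors have equal filterings: r(v ↦ s + x_v) = r(v ↦ s + x'_v). -/
open scoped ENNReal Classical

variable {V : Type*}

theorem leFilter_const_add [LinearOrder V] (s : ℝ≥0∞) (x : V → ℝ≥0∞) :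
    leFilter (fun v => s + x v) = fun v => s + leFilter x v := by
  funext v
  rcases eq_or_ne s ⊤ with rfl | hs
  · simp [leFilter]
  · have hle : ∀ w, s + x w ≤ s + x v ↔ x w ≤ x v := fun w => ENNReal.add_le_add_iff_left hs
    simp only [leFilter, hle]
    split_ifs <;> simp

theorem leFilter_translate_general [LinearOrder V]
    (x x' : V → ℝ≥0∞) (hxx' : leFilter x = leFilter x') (s : ℝ≥0∞) :
    leFilter (fun v => s + x v) = leFilter (fun v => s + x' v) := by
  rw [leFilter_const_add, leFilter_const_add, hxx']

/-- If `r(x) = r(x')`, then for every `s` the uniformly translated vectors have equal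
filterings: `r(v ↦ s + x_v) = r(v ↦ s + x'_v)`. -/
theorem leFilter_translate [Fintype V] [LinearOrder V]
    (x x' : V → ℝ≥0∞) (hxx' : leFilter x = leFilter x') (s : ℝ≥0∞) :
    leFilter (fun v => s + x v) = leFilter (fun v => s + x' v) :=
  leFilter_translate_general x x' hxx' s
end

section
/- The expected number of indices surviving the filter equals the m-th harmonic number: E_σ[ |{v : r_σ(x)_v ≠ ∞}| ] = ∑_{i=1}^{m} 1/i. -/
/-!
An index `v` with `x v < ∞` survives exactly when it comes first, in the order induced by `σ`,
among the indices `w` with `x w ≤ x v`. Composing with a transposition shows that each element of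
a finite set is equally likely to come first, so this has probability `1 / k`, where `k` is the
rank of `x v` among the finite values. By injectivity these ranks run through `1, …, m`, and
linearity of expectation gives the harmonic sum.
-/

open scoped ENNReal Classical
open MeasureTheory

instance (n : ℕ) : MeasurableSpace (Equiv.Perm (Fin n)) := ⊤

noncomputable def rPerm {n : ℕ} (σ : Equiv.Perm (Fin n)) (x : Fin n → ℝ≥0∞)
    (v : Fin n) : ℝ≥0∞ :=
  if ∃ w, σ w < σ v ∧ x w ≤ x v then ⊤ else x v

open Finset

namespace Finset

variable {α : Type*} [LinearOrder α] {M : Type*} [AddCommMonoid M]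

theorem sum_card_filter_le_eq_sum_Icc (s : Finset α) (f : ℕ → M) :
    ∑ a ∈ s, f #{b ∈ s | b ≤ a} = ∑ k ∈ Icc 1 #s, f k := by
  induction s using Finset.induction_on_max with
  | empty => simp
  | insert a s hlt ih =>
    have ha : a ∉ s := fun h => lt_irrefl a (hlt a h)
    rw [sum_insert ha, card_insert_of_notMem ha, sum_Icc_succ_top (by omega), add_comm,
      filter_true_of_mem fun b hb => (mem_insert.1 hb).elim le_of_eq (fun hb => (hlt b hb).le),
      card_insert_of_notMem ha, ← ih]
    congr 1
    refine sum_congr rfl fun b hb => ?_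
    rw [filter_insert, if_neg (not_le.2 (hlt b hb))]

theorem sum_card_filter_apply_le_eq_sum_Icc {ι : Type*} {s : Finset ι} {x : ι → α}
    (hx : Set.InjOn x s) (f : ℕ → M) :
    ∑ i ∈ s, f #{j ∈ s | x j ≤ x i} = ∑ k ∈ Icc 1 #s, f k := by
  classical
  rw [← card_image_of_injOn hx, ← sum_card_filter_le_eq_sum_Icc, sum_image hx]
  refine sum_congr rfl fun i _ => ?_
  rw [filter_image, card_image_of_injOn (hx.mono (filter_subset _ _))]

end Finset

namespace Equiv.Perm

variable {α : Type*} [Fintype α] [LinearOrder α]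

theorem card_filter_forall_le_eq {S : Finset α} {u v : α} (hu : u ∈ S) (hv : v ∈ S) :
    #{σ : Perm α | ∀ w ∈ S, σ u ≤ σ w} = #{σ : Perm α | ∀ w ∈ S, σ v ≤ σ w} := by
  have hswap : ∀ w, swap u v w ∈ S ↔ w ∈ S := fun w => by
    rcases eq_or_ne w u with rfl | hwu
    · simpa using ⟨fun _ => hu, fun _ => hv⟩
    rcases eq_or_ne w v with rfl | hwv
    · simpa using ⟨fun _ => hv, fun _ => hu⟩
    rw [swap_apply_of_ne_of_ne hwu hwv]
  refine card_equiv (Equiv.mulRight (swap u v)) fun σ => ?_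
  simp only [mem_filter, mem_univ, true_and, coe_mulRight, Perm.mul_apply, swap_apply_right]
  refine ⟨fun h w hw => h _ ((hswap w).2 hw), fun h w hw => ?_⟩
  simpa using h (swap u v w) ((hswap _).2 hw)

theorem card_filter_forall_le_mul_card {S : Finset α} {v : α} (hv : v ∈ S) :
    #{σ : Perm α | ∀ w ∈ S, σ v ≤ σ w} * #S = Fintype.card (Perm α) := by
  set A : α → Finset (Perm α) := fun u => {σ | ∀ w ∈ S, σ u ≤ σ w}
  have hcover : S.biUnion A = univ := eq_univ_of_forall fun σ => by
    obtain ⟨u, hu, hmin⟩ := S.exists_min_image σ ⟨v, hv⟩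
    exact mem_biUnion.2 ⟨u, hu, by simpa [A] using hmin⟩
  have hdisj : (S : Set α).PairwiseDisjoint A := fun u hu u' hu' hne =>
    disjoint_left.2 fun σ h h' => by
      simp only [A, mem_filter] at h h'
      exact hne (σ.injective (le_antisymm (h.2 u' hu') (h'.2 u hu)))
  calc #(A v) * #S = ∑ u ∈ S, #(A u) := by
        rw [sum_congr rfl fun u hu => card_filter_forall_le_eq hu hv, sum_const, smul_eq_mul,
          mul_comm]
    _ = Fintype.card (Perm α) := by rw [← card_biUnion hdisj, hcover, card_univ]

theorem card_filter_forall_le_div_card {S : Finset α} {v : α} (hv : v ∈ S) :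
    (#{σ : Perm α | ∀ w ∈ S, σ v ≤ σ w} : ℝ) / Fintype.card (Perm α) = 1 / #S := by
  have hmul := card_filter_forall_le_mul_card hv
  have hpos : #{σ : Perm α | ∀ w ∈ S, σ v ≤ σ w} ≠ 0 := fun h0 =>
    Fintype.card_ne_zero (by rw [← hmul, h0, zero_mul])
  rw [← hmul, Nat.cast_mul, div_mul_cancel_left₀ (Nat.cast_ne_zero.2 hpos), one_div]

end Equiv.Perm

theorem rPerm_ne_top_iff {n : ℕ} (σ : Equiv.Perm (Fin n)) (x : Fin n → ℝ≥0∞) (v : Fin n) :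
    rPerm σ x v ≠ ⊤ ↔ x v ≠ ⊤ ∧ ∀ w, x w ≤ x v → σ v ≤ σ w := by
  unfold rPerm
  split_ifs with h
  · obtain ⟨w, hlt, hle⟩ := h
    simpa using fun _ => ⟨w, hle, hlt⟩
  · push Not at h
    exact ⟨fun hv => ⟨hv, fun w hw => not_lt.1 fun hlt => (h w hlt).not_ge hw⟩, And.left⟩

/-- For a uniformly random permutation `σ`, the expected number of indices surviving the
LE-list filter equals the `m`-th harmonic number, where `m` is the number of
non-`∞` entries. -/
theorem expected_survivors_eq_harmonic (n : ℕ) (x : Fin n → ℝ≥0∞)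
    (hinj : Set.InjOn x {v | x v ≠ ⊤}) :
    ∫ σ, (({v | rPerm σ x v ≠ ⊤} : Set (Fin n)).ncard : ℝ)
        ∂((PMF.uniformOfFintype (Equiv.Perm (Fin n))).toMeasure) =
      ∑ i ∈ Finset.Icc 1 ({v : Fin n | x v ≠ ⊤}).ncard, (1 : ℝ) / i := by
  set T : Finset (Fin n) := {v | x v ≠ ⊤}
  set S : Fin n → Finset (Fin n) := fun v => {w ∈ T | x w ≤ x v}
  have hsurv (σ : Equiv.Perm (Fin n)) : ({v | rPerm σ x v ≠ ⊤} : Set (Fin n)).ncard =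
      #{v ∈ T | ∀ w ∈ S v, σ v ≤ σ w} := by
    rw [← Set.ncard_coe_finset]
    congr 1
    ext v
    simp only [Set.mem_ofPred_eq, rPerm_ne_top_iff, coe_filter, mem_filter, mem_univ, true_and,
      S, T]
    exact and_congr_right fun hv =>
      ⟨fun h w hw => h w hw.2, fun h w hw => h w ⟨ne_top_of_le_ne_top hv hw, hw⟩⟩
  have hT : ({v : Fin n | x v ≠ ⊤}).ncard = #T := by
    rw [← Set.ncard_coe_finset, coe_filter_univ]
  have hinjT : Set.InjOn x T := hinj.mono fun v hv => by simpa [T] using hv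
  rw [PMF.integral_eq_sum, hT, ← sum_card_filter_apply_le_eq_sum_Icc hinjT]
  calc ∑ σ, (PMF.uniformOfFintype _ σ).toReal • (({v | rPerm σ x v ≠ ⊤} : Set (Fin n)).ncard : ℝ)
      = (∑ v ∈ T, #{σ : Equiv.Perm (Fin n) | ∀ w ∈ S v, σ v ≤ σ w} : ℝ) /
          Fintype.card (Equiv.Perm (Fin n)) := by
        simp_rw [hsurv, PMF.uniformOfFintype_apply, ENNReal.toReal_inv, ENNReal.toReal_natCast,
          smul_eq_mul, ← mul_sum, inv_mul_eq_div]
        simp only [← Nat.cast_sum, card_filter]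
        rw [sum_comm]
    _ = ∑ v ∈ T, (1 : ℝ) / #(S v) := by
        rw [sum_div]
        refine sum_congr rfl fun v hv => ?_
        -- `convert` only reconciles the decidability instances of the two filters
        convert Equiv.Perm.card_filter_forall_le_div_card (S := S v) (mem_filter.2 ⟨hv, le_rfl⟩)
end
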